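/- Let b₀, b₁ ∈ ℝ^m and define u_* : ℝ → ℝ^m by u_*(t) = b₀ for t ≤ −1, u_*(t) = ((1−t)/2) b₀ + ((1+t)/2) b₁ for −1 < t < 1, and u_*(t) = b₁ for t ≥ 1; for j ∈ ℕ, j ≥ 1, let u_j : (−1,1) → ℝ^m be given by u_j(x) := u_*(jx). Then for every 1 ≤ p < ∞ and every j ≥ 1, ∬_{(−1,1)×(−1,1)} |u_j(y) − u_j(x)|^p / |y − x|^{2} dy dx ≥ 2 |b₁ − b₀|^p · ln((j+1)² / (4j)). -/

import Mathlib

/-!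
On `(-1, -1/j)` the function `u_j` is constantly `b₀`, and on `(1/j, 1)` it is constantly `b₁`.
Keeping only the two off-diagonal rectangles `(-1, -1/j) × (1/j, 1)` and its mirror image, the
integral is at least `|b₁ - b₀|^p` times twice `∫_a^b ∫_c^d (y - x)⁻² dy dx` (the kernel is
symmetric), and for `a ≤ b < c ≤ d` this double integral equals
`log ((c - a)(d - b) / ((c - b)(d - a)))`, which is `log ((j + 1)² / (4j))` here.
-/

open MeasureTheory Set
open scoped ENNReal NNReal

open Real

noncomputable def ustar {m : ℕ} (b₀ b₁ : EuclideanSpace ℝ (Fin m)) (t : ℝ) :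
    EuclideanSpace ℝ (Fin m) :=
  if t ≤ -1 then b₀
  else if t < 1 then ((1 - t) / 2) • b₀ + ((1 + t) / 2) • b₁
  else b₁

lemma lintegral_Ioo_ofReal_eq_intervalIntegral {f : ℝ → ℝ} {a b : ℝ} (hab : a ≤ b)
    (hf : ContinuousOn f (Icc a b)) (hf₀ : ∀ x ∈ Ioo a b, 0 ≤ f x) :
    ∫⁻ x in Ioo a b, ENNReal.ofReal (f x) = ENNReal.ofReal (∫ x in a..b, f x) := by
  rw [intervalIntegral.integral_of_le hab, integral_Ioc_eq_integral_Ioo,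
    ofReal_integral_eq_lintegral_ofReal (hf.integrableOn_Icc.mono_set Ioo_subset_Icc_self)
      ((ae_restrict_iff' measurableSet_Ioo).mpr (ae_of_all _ hf₀))]

lemma integral_inv_sub_sq {x c d : ℝ} (hxc : x < c) (hcd : c ≤ d) :
    ∫ y in c..d, ((y - x) ^ 2)⁻¹ = (c - x)⁻¹ - (d - x)⁻¹ := by
  rw [intervalIntegral.integral_comp_sub_right (fun y => (y ^ 2)⁻¹)]
  simp only [← zpow_natCast, ← zpow_neg]
  rw [integral_zpow (Or.inr ⟨by norm_num, notMem_uIcc_of_lt (by linarith) (by linarith)⟩)]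
  norm_num
  ring

lemma integral_inv_sub_sub_inv_sub {a b c d : ℝ} (hab : a ≤ b) (hbc : b < c) (hcd : c ≤ d) :
    ∫ x in a..b, ((c - x)⁻¹ - (d - x)⁻¹)
      = log ((c - a) * (d - b) / ((c - b) * (d - a))) := by
  have hint : ∀ e, b < e → IntervalIntegrable (fun x => (e - x)⁻¹) volume a b := fun e he =>
    ContinuousOn.intervalIntegrable <| ContinuousOn.inv₀ (by fun_prop) fun x hx => by
      rw [uIcc_of_le hab] at hx; linarith [hx.2]
  rw [intervalIntegral.integral_sub (hint c hbc) (hint d (by linarith)),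
    intervalIntegral.integral_comp_sub_left (fun x => x⁻¹),
    intervalIntegral.integral_comp_sub_left (fun x => x⁻¹),
    integral_inv_of_pos (by linarith) (by linarith),
    integral_inv_of_pos (by linarith) (by linarith),
    ← log_div (div_pos (by linarith) (by linarith)).ne' (div_pos (by linarith) (by linarith)).ne']
  congr 1
  field_simp

lemma lintegral_Ioo_lintegral_Ioo_inv_sub_sq {a b c d : ℝ} (hab : a ≤ b) (hbc : b < c)
    (hcd : c ≤ d) :
    ∫⁻ x in Ioo a b, ∫⁻ y in Ioo c d, ENNReal.ofReal (((y - x) ^ 2)⁻¹)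
      = ENNReal.ofReal (log ((c - a) * (d - b) / ((c - b) * (d - a)))) := by
  have hinner : ∀ x ∈ Ioo a b, ∫⁻ y in Ioo c d, ENNReal.ofReal (((y - x) ^ 2)⁻¹)
      = ENNReal.ofReal ((c - x)⁻¹ - (d - x)⁻¹) := fun x hx => by
    rw [lintegral_Ioo_ofReal_eq_intervalIntegral hcd ?_ fun y _ => by positivity,
      integral_inv_sub_sq (by linarith [hx.2]) hcd]
    exact ContinuousOn.inv₀ (by fun_prop) fun y hy => by nlinarith [hy.1, hx.2]
  rw [setLIntegral_congr_fun measurableSet_Ioo hinner,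
    lintegral_Ioo_ofReal_eq_intervalIntegral hab ?_ ?_, integral_inv_sub_sub_inv_sub hab hbc hcd]
  · exact ContinuousOn.sub (ContinuousOn.inv₀ (by fun_prop) fun x hx => by linarith [hx.2])
      (ContinuousOn.inv₀ (by fun_prop) fun x hx => by linarith [hx.2])
  · exact fun x hx => sub_nonneg.mpr (inv_anti₀ (by linarith [hx.2]) (by linarith))

lemma coe_nnnorm_rpow_div_coe_nnnorm_rpow_two {E : Type*} [SeminormedAddCommGroup E] (v : E)
    {p : ℝ} (hp : 0 ≤ p) {t : ℝ} (ht : t ≠ 0) :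
    (‖v‖₊ : ℝ≥0∞) ^ p / (‖t‖₊ : ℝ≥0∞) ^ (2 : ℝ)
      = ENNReal.ofReal (‖v‖ ^ p) * ENNReal.ofReal ((t ^ 2)⁻¹) := by
  have hv : (‖v‖₊ : ℝ≥0∞) ^ p = ENNReal.ofReal (‖v‖ ^ p) := by
    rw [← ENNReal.ofReal_coe_nnreal, coe_nnnorm, ENNReal.ofReal_rpow_of_nonneg (norm_nonneg _) hp]
  have ht₂ : (‖t‖₊ : ℝ≥0∞) ^ (2 : ℝ) = ENNReal.ofReal (t ^ 2) := by
    rw [← ENNReal.ofReal_coe_nnreal, coe_nnnorm,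
      ENNReal.ofReal_rpow_of_nonneg (norm_nonneg _) zero_le_two, Real.rpow_two, Real.norm_eq_abs,
      sq_abs]
  rw [hv, ht₂, ← ENNReal.ofReal_div_of_pos (by positivity), div_eq_mul_inv,
    ENNReal.ofReal_mul (by positivity)]

lemma ofReal_two_mul_log_le_lintegral_of_eqOn {E : Type*} [SeminormedAddCommGroup E]
    {u : ℝ → E} {b₀ b₁ : E} {p : ℝ} (hp : 0 ≤ p) {a b c d : ℝ} (hab : a ≤ b) (hbc : b < c)
    (hcd : c ≤ d) (hu₀ : EqOn u (fun _ => b₀) (Ioo a b)) (hu₁ : EqOn u (fun _ => b₁) (Ioo c d)) :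
    ENNReal.ofReal (2 * ‖b₁ - b₀‖ ^ p * log ((c - a) * (d - b) / ((c - b) * (d - a))))
      ≤ ∫⁻ x in Ioo a d, ∫⁻ y in Ioo a d,
          (‖u y - u x‖₊ : ℝ≥0∞) ^ p / (‖y - x‖₊ : ℝ≥0∞) ^ (2 : ℝ) := by
  set K := ‖b₁ - b₀‖ ^ p
  set L := log ((c - a) * (d - b) / ((c - b) * (d - a)))
  let F : ℝ → ℝ → ℝ≥0∞ := fun x y => (‖u y - u x‖₊ : ℝ≥0∞) ^ p / (‖y - x‖₊ : ℝ≥0∞) ^ (2 : ℝ)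
  have hKL : ∫⁻ x in Ioo a b, ∫⁻ y in Ioo c d, ENNReal.ofReal K * ENNReal.ofReal (((y - x) ^ 2)⁻¹)
      = ENNReal.ofReal K * ENNReal.ofReal L := by
    simp only [lintegral_const_mul' _ _ ENNReal.ofReal_ne_top]
    rw [lintegral_Ioo_lintegral_Ioo_inv_sub_sq hab hbc hcd]
  have hlr : ∫⁻ x in Ioo a b, ∫⁻ y in Ioo c d, F x y = ENNReal.ofReal K * ENNReal.ofReal L := by
    rw [← hKL]
    refine setLIntegral_congr_fun measurableSet_Ioo fun x hx =>
      setLIntegral_congr_fun measurableSet_Ioo fun y hy => ?_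
    simp only [F, hu₀ hx, hu₁ hy]
    exact coe_nnnorm_rpow_div_coe_nnnorm_rpow_two _ hp (by linarith [hx.2, hy.1])
  have hrl : ∫⁻ x in Ioo c d, ∫⁻ y in Ioo a b, F x y = ENNReal.ofReal K * ENNReal.ofReal L := by
    rw [← hKL, lintegral_lintegral_swap (f := fun y x => ENNReal.ofReal K *
      ENNReal.ofReal (((x - y) ^ 2)⁻¹)) (by fun_prop)]
    refine setLIntegral_congr_fun measurableSet_Ioo fun x hx =>
      setLIntegral_congr_fun measurableSet_Ioo fun y hy => ?_
    simp only [F, hu₁ hx, hu₀ hy]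
    rw [coe_nnnorm_rpow_div_coe_nnnorm_rpow_two _ hp (by linarith [hx.1, hy.2]), norm_sub_rev,
      ← neg_sub x y, neg_sq]
  have hdisj : Disjoint (Ioo a b) (Ioo c d) :=
    (Ioc_disjoint_Ioc_of_le hbc.le).mono Ioo_subset_Ioc_self Ioo_subset_Ioc_self
  have hsub₀ : Ioo a b ⊆ Ioo a d := Ioo_subset_Ioo_right (by linarith)
  have hsub₁ : Ioo c d ⊆ Ioo a d := Ioo_subset_Ioo_left (by linarith)
  calc ENNReal.ofReal (2 * K * L)
      ≤ ENNReal.ofReal K * ENNReal.ofReal L + ENNReal.ofReal K * ENNReal.ofReal L := by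
        rw [← ENNReal.ofReal_mul (by positivity), two_mul, add_mul]
        exact ENNReal.ofReal_add_le
    _ = (∫⁻ x in Ioo a b, ∫⁻ y in Ioo c d, F x y) + ∫⁻ x in Ioo c d, ∫⁻ y in Ioo a b, F x y := by
        rw [hlr, hrl]
    _ ≤ (∫⁻ x in Ioo a b, ∫⁻ y in Ioo a d, F x y) + ∫⁻ x in Ioo c d, ∫⁻ y in Ioo a d, F x y :=
        add_le_add (lintegral_mono fun _ => lintegral_mono_set hsub₁)
          (lintegral_mono fun _ => lintegral_mono_set hsub₀)
    _ = ∫⁻ x in Ioo a b ∪ Ioo c d, ∫⁻ y in Ioo a d, F x y :=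
        (lintegral_union measurableSet_Ioo hdisj).symm
    _ ≤ ∫⁻ x in Ioo a d, ∫⁻ y in Ioo a d, F x y := lintegral_mono_set (union_subset hsub₀ hsub₁)

lemma ustar_of_le_neg_one {m : ℕ} (b₀ b₁ : EuclideanSpace ℝ (Fin m)) {t : ℝ} (ht : t ≤ -1) :
    ustar b₀ b₁ t = b₀ :=
  if_pos ht

lemma ustar_of_one_le {m : ℕ} (b₀ b₁ : EuclideanSpace ℝ (Fin m)) {t : ℝ} (ht : 1 ≤ t) :
    ustar b₀ b₁ t = b₁ := by
  rw [ustar, if_neg (by linarith), if_neg ht.not_gt]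

/-- lower bound for the critical (`sp = 1`) Gagliardo seminorm of the
rescaled functions `u_j(x) = u_*(j x)` on `(-1, 1)`. -/
theorem stmt_12 (m : ℕ) (b₀ b₁ : EuclideanSpace ℝ (Fin m)) (p : ℝ) (hp : 1 ≤ p)
    (j : ℕ) (hj : 1 ≤ j) :
    ENNReal.ofReal (2 * ‖b₁ - b₀‖ ^ p * Real.log (((j : ℝ) + 1) ^ 2 / (4 * (j : ℝ))))
      ≤ ∫⁻ x in Set.Ioo (-1 : ℝ) 1, ∫⁻ y in Set.Ioo (-1 : ℝ) 1,
          (‖ustar b₀ b₁ ((j : ℝ) * y) - ustar b₀ b₁ ((j : ℝ) * x)‖₊ : ℝ≥0∞) ^ p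
            / (‖y - x‖₊ : ℝ≥0∞) ^ (2 : ℝ) := by
  have hj₁ : (1 : ℝ) ≤ j := by exact_mod_cast hj
  set c : ℝ := (j : ℝ)⁻¹
  have hc₀ : 0 < c := by positivity
  have hc₁ : c ≤ 1 := inv_le_one_of_one_le₀ hj₁
  have hjc : (j : ℝ) * c = 1 := mul_inv_cancel₀ (by positivity)
  have key := ofReal_two_mul_log_le_lintegral_of_eqOn (u := fun t => ustar b₀ b₁ (j * t))
    (by linarith : (0 : ℝ) ≤ p) (neg_le_neg hc₁) (by linarith : -c < c) hc₁
    (fun x hx => ustar_of_le_neg_one b₀ b₁ (by nlinarith [hx.2]))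
    (fun y hy => ustar_of_one_le b₀ b₁ (by nlinarith [hy.1]))
  convert key using 4
  simp only [c]
  field_simp
  ring
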